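/- arXiv:2409.08625 — 9 statements merged into one kernel-verified Lean document; each statement's English description precedes it below -/
import Mathlib

section
/- Let g(x) be a monic irreducible polynomial with integer coefficients of positive degree such that |g(0)|^(1/m) is irrational for every integer m > 1. Then for every integer k ≥ 1, the polynomial g(x^k) is irreducible in ℤ[x]. -/
open Polynomial

open IntermediateField in
lemma keyA {K : Type*} [Field K] {h : K[X]} (hmo : h.Monic) (hirr : Irreducible h)
    (hcond : ∀ q : K, ∀ p : ℕ, p.Prime → q ^ p ≠ h.coeff 0 ∧ q ^ p ≠ -h.coeff 0)
    {p : ℕ} (hp : p.Prime) : Irreducible (h.comp (X ^ p)) := by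
  apply Polynomial.irreducible_comp hmo (monic_X_pow p) hirr
  intro E _ _ x hx
  rw [Polynomial.map_pow, map_X]
  have hint : IsIntegral K x := by
    by_contra hc
    rw [minpoly.eq_zero hc] at hx
    exact hmo.ne_zero hx.symm
  apply X_pow_sub_C_irreducible_of_prime hp
  intro b hb
  have : FiniteDimensional K K⟮x⟯ := IntermediateField.adjoin.finiteDimensional hint
  have hnorm : (Algebra.norm K b) ^ p = (-1) ^ (adjoin.powerBasis hint).dim * h.coeff 0 := by
    rw [← map_pow, hb, ← adjoin.powerBasis_gen hint,
      Algebra.PowerBasis.norm_gen_eq_coeff_zero_minpoly, adjoin.powerBasis_gen,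
      minpoly_gen, hx]
  rcases Int.even_or_odd ((adjoin.powerBasis hint).dim) with he | ho
  · rw [(Even.neg_one_pow (by exact_mod_cast he)), one_mul] at hnorm
    exact (hcond (Algebra.norm K b) p hp).1 hnorm
  · rw [(Odd.neg_one_pow (by exact_mod_cast ho)), neg_one_mul] at hnorm
    exact (hcond (Algebra.norm K b) p hp).2 hnorm

lemma keyB : ∀ k : ℕ, 1 ≤ k → ∀ h : ℚ[X], h.Monic → Irreducible h → 0 < h.natDegree →
    (∀ m : ℕ, 1 < m → ¬ ∃ q : ℚ, q ^ m = |h.coeff 0|) →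
    Irreducible (h.comp (X ^ k)) := by
  intro k
  induction k using Nat.strong_induction_on with
  | _ k IH =>
    intro hk h hmo hirr hdeg hcond
    rcases eq_or_lt_of_le hk with h1 | h1
    · rw [← h1, pow_one, comp_X]
      exact hirr
    · obtain ⟨p, hp, m, rfl⟩ := Nat.exists_prime_and_dvd (by omega : k ≠ 1)
      have hm0 : m ≠ 0 := by rintro rfl; omega
      have hmlt : m < p * m := by
        have := hp.two_le
        calc m = 1 * m := (one_mul m).symm
        _ < p * m := by
            exact Nat.mul_lt_mul_of_lt_of_le (by omega) (le_refl m) (by omega)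
      have IH' := IH m hmlt (by omega) h hmo hirr hdeg hcond
      have e : h.comp (X ^ (p * m)) = (h.comp (X ^ m)).comp (X ^ p) := by
        rw [comp_assoc, X_pow_comp, ← pow_mul, mul_comm]
      rw [e]
      have hmo' : (h.comp (X ^ m)).Monic :=
        hmo.comp (monic_X_pow m) (by simp [natDegree_X_pow, hm0])
      have hc0 : (h.comp (X ^ m)).coeff 0 = h.coeff 0 := by
        simp [coeff_zero_eq_eval_zero, eval_comp, zero_pow hm0]
      refine keyA hmo' IH' ?_ hp
      rw [hc0]
      intro q p' hp'
      constructor <;> intro hq <;> apply hcond p' hp'.one_lt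
      · exact ⟨|q|, by rw [← abs_pow, hq]⟩
      · refine ⟨|q|, ?_⟩
        rw [← abs_pow, hq, abs_neg]

theorem stmt0 (g : Polynomial ℤ) (hm : g.Monic) (hirr : Irreducible g)
    (hdeg : 0 < g.natDegree)
    (hroot : ∀ m : ℕ, 1 < m → ¬ ∃ q : ℚ, (q : ℝ) ^ m = |(g.coeff 0 : ℝ)|) :
    ∀ k : ℕ, 1 ≤ k → Irreducible (g.comp (X ^ k)) := by
  intro k hk
  have hk0 : k ≠ 0 := by omega
  set gQ : ℚ[X] := g.map (algebraMap ℤ ℚ) with hgQ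
  have hgQm : gQ.Monic := hm.map _
  have hgQirr : Irreducible gQ := hm.irreducible_iff_irreducible_map_fraction_map.mp hirr
  have hgQdeg : 0 < gQ.natDegree := by rwa [hgQ, hm.natDegree_map]
  have hgQcond : ∀ m : ℕ, 1 < m → ¬ ∃ q : ℚ, q ^ m = |gQ.coeff 0| := by
    intro m hm1 ⟨q, hq⟩
    apply hroot m hm1
    refine ⟨q, ?_⟩
    have := congrArg (fun r : ℚ => (r : ℝ)) hq
    simp only [hgQ, coeff_map] at this
    push_cast at this ⊢
    exact this
  have key := keyB k hk gQ hgQm hgQirr hgQdeg hgQcond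
  have hmo : (g.comp (X ^ k)).Monic :=
    hm.comp (monic_X_pow k) (by simp [natDegree_X_pow, hk0])
  rw [hmo.irreducible_iff_irreducible_map_fraction_map (K := ℚ), Polynomial.map_comp]
  simpa [hgQ] using key
end

section
/- Let g(x) be a monic irreducible polynomial with integer coefficients whose roots are α₁,…,α_d (with multiplicity). If there exist a root α of g, a prime p, and a polynomial h ∈ ℚ[x] with α = h(α)^p, then |g(0)| is the p-th power of a rational number. -/
open Polynomial IntermediateField

theorem stmt1 (g : Polynomial ℤ) (hm : g.Monic) (hirr : Irreducible g)
    (hdeg : 1 ≤ g.natDegree)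
    (α : ℂ) (hα : aeval α g = 0)
    (p : ℕ) (hp : p.Prime) (h : Polynomial ℚ)
    (heq : α = (aeval α h) ^ p) :
    ∃ q : ℚ, (q : ℝ) ^ p = |(g.coeff 0 : ℝ)| := by
  set G : Polynomial ℚ := g.map (algebraMap ℤ ℚ) with hG
  have hGmonic : G.Monic := hm.map _
  have hGroot : aeval α G = 0 := by
    rw [hG, aeval_map_algebraMap]; exact hα
  have hGirr : Irreducible G :=
    (hm.irreducible_iff_irreducible_map_fraction_map (K := ℚ)).mp hirr
  have hint : IsIntegral ℚ α := ⟨G, hGmonic, hGroot⟩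
  have hmin : minpoly ℚ α = G :=
    (minpoly.eq_of_irreducible_of_monic hGirr hGroot hGmonic).symm
  let pb := adjoin.powerBasis hint
  set x := AdjoinSimple.gen ℚ α with hx
  -- x = h(x)^p in K
  have hxeq : x = (aeval x h) ^ p := by
    have hinj : Function.Injective (algebraMap ℚ⟮α⟯ ℂ) := (algebraMap ℚ⟮α⟯ ℂ).injective
    apply hinj
    rw [map_pow, ← aeval_algebraMap_apply, AdjoinSimple.algebraMap_gen]
    exact heq
  have hnorm : Algebra.norm ℚ x = (Algebra.norm ℚ (aeval x h)) ^ p := by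
    conv_lhs => rw [hxeq]
    rw [map_pow]
  have hgen : Algebra.norm ℚ x = (-1) ^ pb.dim * (g.coeff 0 : ℚ) := by
    have : pb.gen = x := adjoin.powerBasis_gen hint
    rw [← this]; erw [Algebra.PowerBasis.norm_gen_eq_coeff_zero_minpoly pb]; rw [this, hx, minpoly_gen, hmin]
    simp [hG]
  refine ⟨|Algebra.norm ℚ (aeval x h)|, ?_⟩
  have key : ((Algebra.norm ℚ (aeval x h)) : ℝ) ^ p = (-1) ^ pb.dim * (g.coeff 0 : ℝ) := by
    have := hnorm.symm.trans hgen
    exact_mod_cast congrArg (Rat.cast : ℚ → ℝ) this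
  push_cast
  calc |((Algebra.norm ℚ (aeval x h)) : ℝ)| ^ p
      = |((Algebra.norm ℚ (aeval x h)) : ℝ) ^ p| := (abs_pow _ _).symm
    _ = |(-1 : ℝ) ^ pb.dim * (g.coeff 0 : ℝ)| := by rw [key]
    _ = |(g.coeff 0 : ℝ)| := by rw [abs_mul, abs_pow, abs_neg, abs_one, one_pow, one_mul]
end

section
/- Let f be a monic integer polynomial of degree n with height at most H, and suppose f has exactly k roots (counted with multiplicity) whose modulus equals the maximum modulus r(f) of the roots of f. Then r(f)^k ≤ √(n+1) · H; in particular r(f) ≤ ((n+1)^{1/2} H)^{1/k}. -/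
/-!
Write `F` for `f` viewed over `ℂ`. Its Mahler measure is the product of `max 1 ‖α‖` over the
roots `α` of `F` (`F` is monic); keeping only the `k` roots of modulus `r` and bounding the other
factors below by `1` gives `r ^ k ≤ M(F)`. Landau's inequality `M(F) ≤ ‖F‖₂ ≤ √(n + 1) · H` then
finishes the proof.
-/

open Polynomial

lemma Multiset.pow_card_filter_norm_eq_le_prod_max_one_norm (s : Multiset ℂ) (r : ℝ) :
    r ^ (s.filter (‖·‖ = r)).card ≤ (s.map fun a ↦ max 1 ‖a‖).prod := by
  have one_le_prod : ∀ t : Multiset ℂ, 1 ≤ (t.map fun a ↦ max 1 ‖a‖).prod := fun t ↦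
    Multiset.one_le_prod fun x hx ↦ by
      obtain ⟨a, -, rfl⟩ := Multiset.mem_map.mp hx
      exact le_max_left _ _
  rcases lt_or_ge r 0 with hr | hr
  · have hempty : s.filter (‖·‖ = r) = 0 :=
      Multiset.filter_eq_nil.mpr fun a _ h ↦ (norm_nonneg a).not_gt (h ▸ hr)
    simpa [hempty] using one_le_prod s
  have hfilter : ((s.filter (‖·‖ = r)).map fun a ↦ max 1 ‖a‖).prod
      = max 1 r ^ (s.filter (‖·‖ = r)).card := by
    rw [Multiset.map_congr rfl fun a ha ↦ by rw [(Multiset.mem_filter.mp ha).2],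
      Multiset.map_const', Multiset.prod_replicate]
  calc r ^ (s.filter (‖·‖ = r)).card
      ≤ max 1 r ^ (s.filter (‖·‖ = r)).card := pow_le_pow_left₀ hr (le_max_right 1 r) _
    _ ≤ ((s.filter (‖·‖ = r)).map fun a ↦ max 1 ‖a‖).prod
          * ((s.filter fun a ↦ ¬‖a‖ = r).map fun a ↦ max 1 ‖a‖).prod := by
        rw [hfilter]
        exact le_mul_of_one_le_right (by positivity) (one_le_prod _)
    _ = (s.map fun a ↦ max 1 ‖a‖).prod := by
        rw [← Multiset.prod_add, ← Multiset.map_add, Multiset.filter_add_not]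

lemma Polynomial.Monic.pow_card_roots_norm_eq_le_mahlerMeasure {p : ℂ[X]} (hp : p.Monic)
    (r : ℝ) : r ^ (p.roots.filter (‖·‖ = r)).card ≤ p.mahlerMeasure :=
  (p.roots.pow_card_filter_norm_eq_le_prod_max_one_norm r).trans <|
    prod_max_one_norm_roots_le_mahlerMeasure_of_one_le_leadingCoeff (by simp [hp.leadingCoeff])

lemma Polynomial.supNorm_le {A : Type*} [NormedRing A] (p : A[X]) {H : ℝ}
    (h : ∀ i, ‖p.coeff i‖ ≤ H) : p.supNorm ≤ H := by
  obtain ⟨i, hi⟩ := p.exists_eq_supNorm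
  exact hi ▸ h i

lemma Real.le_rpow_one_div_of_pow_le {x y : ℝ} {k : ℕ} (hx : 0 ≤ x) (hk : k ≠ 0)
    (h : x ^ k ≤ y) : x ≤ y ^ ((1 : ℝ) / k) := by
  rwa [one_div, Real.le_rpow_inv_iff_of_pos hx ((pow_nonneg hx k).trans h) (by positivity),
    Real.rpow_natCast]

theorem stmt3_general (f : Polynomial ℤ) (n : ℕ) (hm : f.Monic) (hdeg : f.natDegree = n)
    (H : ℝ) (hH : ∀ i, |(f.coeff i : ℝ)| ≤ H)
    (r : ℝ) (k : ℕ)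
    (hattain : ∃ z ∈ (f.map (Int.castRingHom ℂ)).roots, ‖z‖ = r)
    (hk : ((f.map (Int.castRingHom ℂ)).roots.filter
      (fun z => ‖z‖ = r)).card = k) :
    r ^ k ≤ Real.sqrt (n + 1) * H ∧ r ≤ (Real.sqrt (n + 1) * H) ^ ((1 : ℝ) / k) := by
  set F := f.map (Int.castRingHom ℂ)
  have hF_natDegree : F.natDegree = n := by rw [hm.natDegree_map, hdeg]
  have hF_supNorm : F.supNorm ≤ H :=
    F.supNorm_le fun i ↦ by simpa [F, coeff_map, Complex.norm_intCast] using hH i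
  have hbound : r ^ k ≤ √(n + 1) * H :=
    calc r ^ k ≤ F.mahlerMeasure := hk ▸ (hm.map _).pow_card_roots_norm_eq_le_mahlerMeasure r
      _ ≤ √(F.natDegree + 1) * F.supNorm := F.mahlerMeasure_le_sqrt_natDegree_add_one_mul_supNorm
      _ ≤ √(n + 1) * H := by rw [hF_natDegree]; gcongr
  obtain ⟨z, hz, rfl⟩ := hattain
  have hk0 : k ≠ 0 := by
    rw [← hk]
    exact (Multiset.card_pos_iff_exists_mem.mpr
      ⟨z, Multiset.mem_filter_of_mem (p := (‖·‖ = ‖z‖)) hz rfl⟩).ne'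
  exact ⟨hbound, Real.le_rpow_one_div_of_pow_le (norm_nonneg z) hk0 hbound⟩

theorem stmt3 (f : Polynomial ℤ) (n : ℕ) (hm : f.Monic) (hdeg : f.natDegree = n)
    (hn : 1 ≤ n) (H : ℝ) (hH : ∀ i, |(f.coeff i : ℝ)| ≤ H)
    (r : ℝ) (k : ℕ)
    (hr : ∀ z ∈ (f.map (Int.castRingHom ℂ)).roots, ‖z‖ ≤ r)
    (hattain : ∃ z ∈ (f.map (Int.castRingHom ℂ)).roots, ‖z‖ = r)
    (hk : ((f.map (Int.castRingHom ℂ)).roots.filter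
      (fun z => ‖z‖ = r)).card = k) :
    r ^ k ≤ Real.sqrt (n + 1) * H ∧ r ≤ (Real.sqrt (n + 1) * H) ^ ((1 : ℝ) / k) :=
  stmt3_general f n hm hdeg H hH r k hattain hk
end

section
/- Let β₁,…,β_ℓ be the roots of a monic irreducible integer polynomial P of degree ℓ ≥ 2, all real with β_i² < 4m for a positive integer m. Then g(x) = ∏_{i=1}^{ℓ} (x² − β_i x + m) is irreducible in ℤ[x]. -/
open Polynomial

open scoped IntermediateField

private lemma aux_monic_quad {R : Type*} [CommRing R] [Nontrivial R] (b c : R) :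
    (X ^ 2 - C b * X + C c).Monic := by
  have h : X ^ 2 - C b * X + C c = X ^ 2 + (C (-b) * X + C c) := by
    simp only [map_neg]; ring
  rw [h]
  exact monic_X_pow_add (lt_of_le_of_lt degree_linear_le (by norm_num))

private lemma aux_natDegree_quad {R : Type*} [CommRing R] [Nontrivial R] (b c : R) :
    (X ^ 2 - C b * X + C c).natDegree = 2 := by
  have h : X ^ 2 - C b * X + C c = X ^ 2 + (C (-b) * X + C c) := by
    simp only [map_neg]; ring
  have hd : (X ^ 2 - C b * X + C c).degree = 2 := by
    rw [h, degree_add_eq_left_of_degree_lt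
      (by rw [degree_X_pow]; exact lt_of_le_of_lt degree_linear_le (by norm_num)),
      degree_X_pow]
    norm_cast
  exact natDegree_eq_of_degree_eq_some hd

private lemma aux_sum_coeff_prod_eq {K : Type*} [Field K] (c : K) (s : Multiset K) :
    (∑ i ∈ Finset.range (Multiset.card s + 1),
      C (((s.map fun β => X - C β).prod).coeff i) * (X ^ 2 + C c) ^ i *
        X ^ (Multiset.card s - i))
      = (s.map fun β => X ^ 2 - C β * X + C c).prod := by
  set n := Multiset.card s with hn
  set Q : K[X] := (s.map fun β => X - C β).prod with hQ
  have hQdeg : Q.natDegree = n := natDegree_multiset_prod_X_sub_C_eq_card s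
  apply RatFunc.algebraMap_injective K
  set φ := algebraMap K[X] (RatFunc K) with hφ
  set f := algebraMap K (RatFunc K) with hf
  have hφC : ∀ a : K, φ (Polynomial.C a) = f a := by
    intro a
    rw [hφ, hf, RatFunc.algebraMap_C, RatFunc.algebraMap_eq_C]
  set t := φ X with ht
  have ht0 : t ≠ 0 := RatFunc.algebraMap_ne_zero X_ne_zero
  set u := t ^ 2 + f c with hu
  have hmain : ∀ i ∈ Finset.range (n + 1),
      φ (C (Q.coeff i) * (X ^ 2 + C c) ^ i * X ^ (n - i))
        = f (Q.coeff i) * (u / t) ^ i * t ^ n := by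
    intro i hi
    have hin : i ≤ n := Nat.lt_succ_iff.mp (Finset.mem_range.mp hi)
    rw [map_mul, map_mul, map_pow, map_pow, map_add, map_pow, hφC, hφC]
    rw [div_pow, show t ^ n = t ^ i * t ^ (n - i) by
      rw [← pow_add, Nat.add_sub_cancel' hin]]
    have hti : t ^ i ≠ 0 := pow_ne_zero _ ht0
    field_simp
    ring
  rw [map_sum, Finset.sum_congr rfl hmain, ← Finset.sum_mul]
  have heval : Polynomial.eval₂ f (u / t) Q
      = ∑ i ∈ Finset.range (n + 1), f (Q.coeff i) * (u / t) ^ i := by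
    rw [eval₂_eq_sum_range, hQdeg]
  rw [← heval]
  have hprod : Polynomial.eval₂ f (u / t) Q = (s.map fun β => u / t - f β).prod := by
    rw [hQ, eval₂_multiset_prod, Multiset.map_map]
    congr 1
    apply Multiset.map_congr rfl
    intro β _
    simp [eval₂_sub]
  rw [hprod, map_multiset_prod, Multiset.map_map,
    show t ^ n = (s.map fun _ => t).prod by
      rw [Multiset.map_const', Multiset.prod_replicate, hn],
    ← Multiset.prod_map_mul]
  congr 1
  apply Multiset.map_congr rfl
  intro β _
  simp only [Function.comp_apply, map_add, map_sub, map_mul, map_pow, hφC]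
  rw [sub_mul, div_mul_cancel₀ _ ht0, hu]
  ring

theorem stmt6 (m : ℕ) (hm : 1 ≤ m) (ℓ : ℕ) (hℓ : 2 ≤ ℓ) (P : Polynomial ℤ)
    (hmonic : P.Monic) (hirr : Irreducible P) (hdeg : P.natDegree = ℓ)
    (hreal : (P.map (Int.castRingHom ℝ)).roots.card = ℓ)
    (hbound : ∀ β ∈ (P.map (Int.castRingHom ℝ)).roots, β ^ 2 < 4 * m)
    (g : Polynomial ℝ)
    (hg : g = ((P.map (Int.castRingHom ℝ)).roots.map
      (fun β => X ^ 2 - C β * X + C (m : ℝ))).prod) :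
    ∃ G : Polynomial ℤ, G.map (Int.castRingHom ℝ) = g ∧ Irreducible G := by
  set Pr := P.map (Int.castRingHom ℝ) with hPrdef
  have hPrMonic : Pr.Monic := hmonic.map _
  have hPrdeg : Pr.natDegree = ℓ := by
    have hinjR' : Function.Injective ⇑(Int.castRingHom ℝ) := fun a b h =>
      Int.cast_injective h
    rw [hPrdef, natDegree_map_eq_of_injective hinjR', hdeg]
  have hsplit : (Pr.roots.map fun a => X - C a).prod = Pr := by
    have h := C_leadingCoeff_mul_prod_multiset_X_sub_C (p := Pr)
      (by rw [hreal, hPrdeg])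
    rwa [hPrMonic.leadingCoeff, map_one, one_mul] at h
  set G : ℤ[X] := ∑ i ∈ Finset.range (ℓ + 1),
    C (P.coeff i) * (X ^ 2 + C (m : ℤ)) ^ i * X ^ (ℓ - i) with hGdef
  have hmap : G.map (Int.castRingHom ℝ) = g := by
    have h1 := aux_sum_coeff_prod_eq ((m : ℝ)) Pr.roots
    rw [hreal, hsplit] at h1
    rw [hg, ← h1, hGdef, Polynomial.map_sum]
    refine Finset.sum_congr rfl fun i hi => ?_
    simp only [Polynomial.map_mul, Polynomial.map_pow, Polynomial.map_add,
      Polynomial.map_X, Polynomial.map_C, hPrdef, coeff_map,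
      Int.coe_castRingHom, Int.cast_natCast]
  have hgmonic : g.Monic := by
    rw [hg]
    apply monic_multiset_prod_of_monic
    intro β _
    exact aux_monic_quad β (m : ℝ)
  have hgdeg : g.natDegree = 2 * ℓ := by
    have hmon : ∀ p ∈ Pr.roots.map (fun β => X ^ 2 - C β * X + C (m : ℝ)), p.Monic := by
      intro p hp
      obtain ⟨β, _, rfl⟩ := Multiset.mem_map.mp hp
      exact aux_monic_quad β (m : ℝ)
    have h2 : ∀ β ∈ Pr.roots,
        (Polynomial.natDegree ∘ fun β => X ^ 2 - C β * X + C (m : ℝ)) β = 2 :=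
      fun β _ => aux_natDegree_quad β (m : ℝ)
    rw [hg, natDegree_multiset_prod_of_monic _ hmon, Multiset.map_map,
      Multiset.map_congr rfl h2, Multiset.map_const', Multiset.sum_replicate,
      hreal, smul_eq_mul, mul_comm]
  have hinjR : Function.Injective ⇑(Int.castRingHom ℝ) := fun a b h =>
    Int.cast_injective h
  have hinjQ : Function.Injective ⇑(Int.castRingHom ℚ) := fun a b h =>
    Int.cast_injective h
  have hGmonic : G.Monic := monic_of_injective hinjR (hmap ▸ hgmonic)
  have hGdeg : G.natDegree = 2 * ℓ := by
    rw [← natDegree_map_eq_of_injective hinjR, hmap, hgdeg]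
  -- choose a root β of Pr
  have hroots0 : Pr.roots ≠ 0 := by
    intro h
    rw [h] at hreal
    simp at hreal
    omega
  obtain ⟨β, hβ⟩ := Multiset.exists_mem_of_ne_zero hroots0
  have hβroot : Pr.eval β = 0 := isRoot_of_mem_roots hβ
  have hβb : β ^ 2 < 4 * m := hbound β hβ
  set q : ℝ := Real.sqrt (4 * m - β ^ 2) with hqdef
  have hq0 : 0 < q := Real.sqrt_pos.mpr (by linarith)
  have hq2 : q ^ 2 = 4 * m - β ^ 2 := Real.sq_sqrt (by linarith)
  set z : ℂ := (↑(β / 2) : ℂ) + ↑(q / 2) * Complex.I with hzdef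
  have hq2c : (q : ℂ) ^ 2 = 4 * (m : ℂ) - (β : ℂ) ^ 2 := by
    have := congrArg (Complex.ofReal) hq2
    push_cast at this
    exact_mod_cast this
  have hI : Complex.I ^ 2 = -1 := Complex.I_sq
  have hz : z ^ 2 - (β : ℂ) * z + (m : ℂ) = 0 := by
    rw [hzdef]
    push_cast
    linear_combination (Complex.I ^ 2 / 4) * hq2c + ((4 * (m : ℂ) - (β : ℂ) ^ 2) / 4) * hI
  have hzim : z.im = q / 2 := by
    simp [hzdef]
  have hznr : z.im ≠ 0 := by rw [hzim]; positivity
  have hz0 : z ≠ 0 := by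
    intro h
    rw [h] at hzim
    simp at hzim
    linarith
  -- G vanishes at z
  have hGz : Polynomial.aeval z G = 0 := by
    have hdvd : (X ^ 2 - C β * X + C (m : ℝ)) ∣ g := by
      rw [hg]
      exact Multiset.dvd_prod (Multiset.mem_map_of_mem _ hβ)
    obtain ⟨r, hr⟩ := hdvd
    have hcomp : G.map (Int.castRingHom ℂ)
        = (G.map (Int.castRingHom ℝ)).map Complex.ofRealHom := by
      rw [Polynomial.map_map]
      congr 1
    rw [aeval_def, ← eval_map, show algebraMap ℤ ℂ = Int.castRingHom ℂ from rfl,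
      hcomp, hmap, hr, Polynomial.map_mul, eval_mul]
    have : Polynomial.eval z ((X ^ 2 - C β * X + C (m : ℝ)).map Complex.ofRealHom) = 0 := by
      simp only [Polynomial.map_add, Polynomial.map_sub, Polynomial.map_pow,
        Polynomial.map_mul, Polynomial.map_X, Polynomial.map_C, eval_add, eval_sub,
        eval_pow, eval_mul, eval_X, eval_C, Complex.ofRealHom_eq_coe]
      push_cast
      exact hz
    rw [this, zero_mul]
  -- pass to ℚ
  set Pq := P.map (Int.castRingHom ℚ) with hPqdef
  have hPqirr : Irreducible Pq :=
    (IsPrimitive.Int.irreducible_iff_irreducible_map_cast hmonic.isPrimitive).mp hirr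
  have hPqmonic : Pq.Monic := hmonic.map _
  have hPqdeg : Pq.natDegree = ℓ := by
    rw [hPqdef, natDegree_map_eq_of_injective hinjQ, hdeg]
  set Gq := G.map (Int.castRingHom ℚ) with hGqdef
  have hGqmonic : Gq.Monic := hGmonic.map _
  have hGqdeg : Gq.natDegree = 2 * ℓ := by
    rw [hGqdef, natDegree_map_eq_of_injective hinjQ, hGdeg]
  have hGqz : Polynomial.aeval z Gq = 0 := by
    rw [hGqdef, show Int.castRingHom ℚ = algebraMap ℤ ℚ from rfl, aeval_map_algebraMap]
    exact hGz
  have hzint : IsIntegral ℚ z := ⟨Gq, hGqmonic, by rwa [← aeval_def]⟩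
  -- α := β as a complex number
  have hαPq : Polynomial.aeval (β : ℂ) Pq = 0 := by
    have hcomp : P.map (Int.castRingHom ℂ) = Pr.map Complex.ofRealHom := by
      rw [hPrdef, Polynomial.map_map]
      congr 1
    rw [hPqdef, show Int.castRingHom ℚ = algebraMap ℤ ℚ from rfl, aeval_map_algebraMap,
      aeval_def, ← eval_map, show algebraMap ℤ ℂ = Int.castRingHom ℂ from rfl, hcomp,
      eval_map, show ((β : ℂ)) = Complex.ofRealHom β from rfl, eval₂_at_apply, hβroot,
      map_zero]
  have hmin : minpoly ℚ ((β : ℂ)) = Pq :=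
    (minpoly.eq_of_irreducible_of_monic hPqirr hαPq hPqmonic).symm
  have hαint : IsIntegral ℚ ((β : ℂ)) := ⟨Pq, hPqmonic, by rwa [← aeval_def]⟩
  have hKzfin : FiniteDimensional ℚ ℚ⟮z⟯ :=
    IntermediateField.adjoin.finiteDimensional hzint
  have hβform : (β : ℂ) = z + (m : ℂ) * z⁻¹ := by
    field_simp
    linear_combination -hz
  have hβmem : (β : ℂ) ∈ ℚ⟮z⟯ := by
    rw [hβform]
    exact add_mem (IntermediateField.mem_adjoin_simple_self ℚ z)
      (mul_mem (IntermediateField.natCast_mem ℚ⟮z⟯ m)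
        (inv_mem (IntermediateField.mem_adjoin_simple_self ℚ z)))
  have hfinrankz : Module.finrank ℚ ℚ⟮z⟯ = (minpoly ℚ z).natDegree :=
    IntermediateField.adjoin.finrank hzint
  have hdvdl : ℓ ∣ (minpoly ℚ z).natDegree := by
    have hx : IsIntegral ℚ (⟨(β : ℂ), hβmem⟩ : ℚ⟮z⟯) := IsIntegral.of_finite ℚ _
    have h2 := minpoly.degree_dvd hx
    rw [hfinrankz] at h2
    have h3 : minpoly ℚ (⟨(β : ℂ), hβmem⟩ : ℚ⟮z⟯) = minpoly ℚ ((β : ℂ)) := by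
      have h4 := minpoly.algebraMap_eq (A := ℚ) (algebraMap ℚ⟮z⟯ ℂ).injective
        (⟨(β : ℂ), hβmem⟩ : ℚ⟮z⟯)
      simpa using h4.symm
    rw [h3, hmin, hPqdeg] at h2
    exact h2
  have hle2 : (minpoly ℚ z).natDegree ≤ 2 * ℓ := by
    have h5 := Polynomial.natDegree_le_of_dvd (minpoly.dvd ℚ z hGqz) hGqmonic.ne_zero
    rwa [hGqdeg] at h5
  have hneq : (minpoly ℚ z).natDegree ≠ ℓ := by
    intro hcontra
    have hfinβ : Module.finrank ℚ ℚ⟮(β : ℂ)⟯ = ℓ := by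
      rw [IntermediateField.adjoin.finrank hαint, hmin, hPqdeg]
    have hEq : ℚ⟮(β : ℂ)⟯ = ℚ⟮z⟯ := by
      apply IntermediateField.eq_of_le_of_finrank_le
        (IntermediateField.adjoin_simple_le_iff.mpr hβmem)
      rw [hfinβ, hfinrankz, hcontra]
    have hzmem : z ∈ ℚ⟮(β : ℂ)⟯ := hEq ▸ IntermediateField.mem_adjoin_simple_self ℚ z
    have hsub : ℚ⟮(β : ℂ)⟯ ≤ Subfield.toIntermediateField (K := ℚ)
        Complex.ofRealHom.fieldRange (fun x => ⟨(x : ℝ), by simp⟩) :=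
      IntermediateField.adjoin_simple_le_iff.mpr ⟨β, by simp⟩
    have h8 : z ∈ Complex.ofRealHom.fieldRange := hsub hzmem
    obtain ⟨r, hr⟩ := RingHom.mem_fieldRange.mp h8
    apply hznr
    rw [show z = Complex.ofRealHom r from hr.symm]
    simp
  obtain ⟨k, hk⟩ := hdvdl
  have hd0 : 0 < (minpoly ℚ z).natDegree := minpoly.natDegree_pos hzint
  have hk2 : k = 2 := by
    rcases Nat.lt_or_ge k 3 with h | h
    · interval_cases k
      · omega
      · omega
      · rfl
    · exfalso
      have h6 : ℓ * 3 ≤ ℓ * k := Nat.mul_le_mul_left ℓ h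
      rw [hk] at hle2
      have h7 : ℓ * 3 ≤ 2 * ℓ := le_trans h6 hle2
      omega
  have hdeg2 : (minpoly ℚ z).natDegree = 2 * ℓ := by rw [hk, hk2]; ring
  obtain ⟨u, hu⟩ := minpoly.dvd ℚ z hGqz
  have huM : u.Monic := (minpoly.monic hzint).of_mul_monic_left (hu ▸ hGqmonic)
  have hu0 : u.natDegree = 0 := by
    have hmul := natDegree_mul (minpoly.ne_zero hzint) huM.ne_zero
    rw [← hu, hGqdeg, hdeg2] at hmul
    omega
  have hu1 : u = 1 := (Monic.natDegree_eq_zero huM).mp hu0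
  have hGqeq : Gq = minpoly ℚ z := by rw [hu, hu1, mul_one]
  have hGqirr : Irreducible Gq := hGqeq ▸ minpoly.irreducible hzint
  exact ⟨G, hmap, (IsPrimitive.Int.irreducible_iff_irreducible_map_cast
    hGmonic.isPrimitive).mpr hGqirr⟩
end

section
/- Every monic integer polynomial of degree 3 that is reducible over ℤ, has all three of its roots of equal modulus, and factors as the product of a degree-one factor and an irreducible degree-two factor, is of the form (x + a)(x² + bx + a²) with integers a, b satisfying b² − 4a² < 0. -/
/-!
Normalise the factorisation `f = l * q` so that both factors are monic; then `l = X + a` and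
`q = X² + bX + c`. A complex root `z` of `q` has `‖z‖ = |a|`, because `-a` is also a root of `f`.
If `z` were real it would be `±a`, an integer root of the irreducible quadratic `q`; so `z` is
not real, and comparing real and imaginary parts of `z² + bz + c = 0` gives `b = -2 Re z` and
`c = |z|² = a²`, whence `b² - 4a² = -4 (Im z)² < 0`.
-/

open Polynomial

namespace Polynomial

variable {R : Type*}

theorem Monic.eq_X_sq_add_C_mul_X_add_C [Semiring R] {p : R[X]} (hm : p.Monic)
    (hnd : p.natDegree = 2) : p = X ^ 2 + C (p.coeff 1) * X + C (p.coeff 0) := by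
  conv_lhs => rw [hm.as_sum, hnd]
  simp only [Finset.sum_range_succ, Finset.sum_range_zero, pow_zero, pow_one, mul_one]
  abel

theorem Monic.exists_monic_associated_factors [CommSemiring R] [NoZeroDivisors R]
    {l q : R[X]} (h : (l * q).Monic) :
    ∃ l' q' : R[X], l'.Monic ∧ q'.Monic ∧ Associated l l' ∧ Associated q q' ∧
      l * q = l' * q' := by
  have hlc : q.leadingCoeff * l.leadingCoeff = 1 := by
    rw [mul_comm, ← leadingCoeff_mul]
    exact h
  refine ⟨C q.leadingCoeff * l, C l.leadingCoeff * q,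
    monic_C_mul_of_mul_leadingCoeff_eq_one hlc,
    monic_C_mul_of_mul_leadingCoeff_eq_one (by rwa [mul_comm]), ?_, ?_, ?_⟩
  · exact associated_unit_mul_right _ _ (isUnit_C.mpr (.of_mul_eq_one _ hlc))
  · exact associated_unit_mul_right _ _ (isUnit_C.mpr (.of_mul_eq_one_right _ hlc))
  · rw [mul_mul_mul_comm, ← C_mul, hlc, C_1, one_mul]

end Polynomial

namespace Complex

theorem eq_or_eq_neg_of_im_eq_zero_of_norm_eq {z : ℂ} {r : ℝ} (him : z.im = 0)
    (h : ‖z‖ = |r|) : z = r ∨ z = -r := by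
  have hz : z = (z.re : ℂ) := ext rfl (by simp [him])
  rw [hz, norm_real, Real.norm_eq_abs, abs_eq_abs] at h
  rw [hz]
  rcases h with h | h
  · exact Or.inl (by rw [h])
  · exact Or.inr (by rw [h, ofReal_neg])

theorem quadratic_coeffs_of_root_of_im_ne_zero {b c : ℝ} {z : ℂ}
    (hz : z ^ 2 + b * z + c = 0) (him : z.im ≠ 0) : b = -2 * z.re ∧ c = normSq z := by
  have hre := congrArg re hz
  have him' := congrArg im hz
  simp only [pow_two, add_re, mul_re, ofReal_re, ofReal_im, add_im, mul_im, zero_re,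
    zero_im] at hre him'
  have hb : b = -2 * z.re := by
    have : (2 * z.re + b) * z.im = 0 := by linear_combination him'
    linarith [(mul_eq_zero.mp this).resolve_right him]
  refine ⟨hb, ?_⟩
  rw [normSq_apply]
  subst hb
  linear_combination hre

end Complex

theorem Int.quadratic_coeffs_of_irreducible_of_norm_root_eq {a b c : ℤ}
    (hirr : Irreducible (X ^ 2 + C b * X + C c : ℤ[X])) {z : ℂ}
    (hz : z ^ 2 + b * z + c = 0) (hza : ‖z‖ = |(a : ℝ)|) : c = a ^ 2 ∧ b ^ 2 - 4 * c < 0 := by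
  have hnoroot (n : ℤ) : n ^ 2 + b * n + c ≠ 0 := by
    have hdeg : (X ^ 2 + C b * X + C c : ℤ[X]).natDegree = 2 := by compute_degree!
    simpa using hirr.not_isRoot_of_natDegree_ne_one (by omega) (x := n)
  have him : z.im ≠ 0 := by
    intro h0
    rcases Complex.eq_or_eq_neg_of_im_eq_zero_of_norm_eq h0 hza with rfl | rfl
    · exact hnoroot a (by exact_mod_cast hz)
    · exact hnoroot (-a) (by exact_mod_cast hz)
  obtain ⟨hb, hc⟩ :=
    Complex.quadratic_coeffs_of_root_of_im_ne_zero (b := b) (c := c) (by exact_mod_cast hz) him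
  have hca : (c : ℝ) = a ^ 2 := by rw [hc, Complex.normSq_eq_norm_sq, hza, sq_abs]
  have hdisc : ((b ^ 2 - 4 * c : ℤ) : ℝ) < 0 := by
    push_cast
    rw [hb, hc, Complex.normSq_apply]
    nlinarith [mul_self_pos.mpr him]
  exact ⟨by exact_mod_cast hca, by exact_mod_cast hdisc⟩

theorem stmt7_general (f : Polynomial ℤ) (hm : f.Monic)
    (heqmod : ∀ z ∈ (f.map (Int.castRingHom ℂ)).roots,
      ∀ w ∈ (f.map (Int.castRingHom ℂ)).roots, ‖z‖ = ‖w‖)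
    (hfactor : ∃ l q : Polynomial ℤ, l.natDegree = 1 ∧ q.natDegree = 2 ∧
      Irreducible q ∧ f = l * q) :
    ∃ a b : ℤ, f = (X + C a) * (X ^ 2 + C b * X + C (a ^ 2)) ∧ b ^ 2 - 4 * a ^ 2 < 0 := by
  obtain ⟨l₀, q₀, hl₀, hq₀, hirr₀, rfl⟩ := hfactor
  obtain ⟨l, q, hl, hq, hll, hqq, hlq⟩ := hm.exists_monic_associated_factors
  have hlX := hl.eq_X_add_C (natDegree_eq_of_degree_eq (degree_eq_degree_of_associated hll) ▸ hl₀)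
  have hqX := hq.eq_X_sq_add_C_mul_X_add_C
    (natDegree_eq_of_degree_eq (degree_eq_degree_of_associated hqq) ▸ hq₀)
  set a := l.coeff 0
  set b := q.coeff 1
  set c := q.coeff 0
  have hirr : Irreducible (X ^ 2 + C b * X + C c) := hqX ▸ hqq.irreducible hirr₀
  rw [hlX, hqX] at hlq
  have hF0 : (l₀ * q₀).map (Int.castRingHom ℂ) ≠ 0 := (hm.map _).ne_zero
  have hF : (l₀ * q₀).map (Int.castRingHom ℂ) =
      (X + C (a : ℂ)) * (X ^ 2 + C (b : ℂ) * X + C (c : ℂ)) := by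
    simp [hlq]
  have hdeg : (X ^ 2 + C (b : ℂ) * X + C (c : ℂ)).degree = 2 := by compute_degree!
  obtain ⟨z, hz⟩ := Complex.exists_root (hdeg ▸ zero_lt_two)
  have hza : ‖z‖ = ‖-(a : ℂ)‖ :=
    heqmod z (by rw [mem_roots hF0, hF, IsRoot, eval_mul, hz.eq_zero, mul_zero])
      (-a) (by rw [mem_roots hF0, hF]; simp)
  obtain ⟨hc, hdisc⟩ := Int.quadratic_coeffs_of_irreducible_of_norm_root_eq hirr
    (by simpa using hz) (by simpa using hza)
  exact ⟨a, b, by rw [hlq, hc], hc ▸ hdisc⟩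

theorem stmt7 (f : Polynomial ℤ) (hm : f.Monic) (hdeg : f.natDegree = 3)
    (heqmod : ∀ z ∈ (f.map (Int.castRingHom ℂ)).roots,
      ∀ w ∈ (f.map (Int.castRingHom ℂ)).roots, ‖z‖ = ‖w‖)
    (hfactor : ∃ l q : Polynomial ℤ, l.natDegree = 1 ∧ q.natDegree = 2 ∧
      Irreducible q ∧ f = l * q) :
    ∃ a b : ℤ, f = (X + C a) * (X ^ 2 + C b * X + C (a ^ 2)) ∧ b ^ 2 - 4 * a ^ 2 < 0 :=
  stmt7_general f hm heqmod hfactor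
end

section
/- Let f ∈ ℤ[x] be a monic irreducible polynomial of degree 4 whose four roots all have equal modulus and which is not of the form x⁴ + ax² + b. Then f has no real roots, and f factors over ℝ as (x² − ux + r)(x² − vx + r), where r ∈ ℤ_{>0} with r² equal to the constant coefficient of f, u + v ∈ ℤ \ {0}, uv ∈ ℤ, and u² < 4r, v² < 4r. -/
open Polynomial

theorem decomp4 {R : Type*} [CommRing R] (f : R[X]) (hm : f.Monic) (hdeg : f.natDegree = 4) :
    f = X^4 + C (f.coeff 3) * X^3 + C (f.coeff 2) * X^2 + C (f.coeff 1) * X + C (f.coeff 0) := by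
  have h4 : f.coeff 4 = 1 := by have := hm.coeff_natDegree; rwa [hdeg] at this
  conv_lhs => rw [f.as_sum_range' 5 (by omega), Finset.sum_range_succ, Finset.sum_range_succ,
    Finset.sum_range_succ, Finset.sum_range_succ, Finset.sum_range_one, h4]
  simp only [← C_mul_X_pow_eq_monomial, map_one]
  ring

theorem memroots (f : ℤ[X]) (hm : f.Monic) (x : ℝ)
    (hx : (f.map (Int.castRingHom ℝ)).IsRoot x) :
    (x : ℂ) ∈ (f.map (Int.castRingHom ℂ)).roots := by
  rw [mem_roots ((hm.map _).ne_zero)]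
  have h : f.map (Int.castRingHom ℂ) = (f.map (Int.castRingHom ℝ)).map (algebraMap ℝ ℂ) := by
    rw [map_map]; congr 1
  rw [IsRoot, h, eval_map, ← aeval_def]
  erw [aeval_ofReal, hx]
  simp

theorem noRealRoot (f : Polynomial ℤ) (hm : f.Monic) (hirr : Irreducible f)
    (hdeg : f.natDegree = 4)
    (heqmod : ∀ z ∈ (f.map (Int.castRingHom ℂ)).roots,
      ∀ w ∈ (f.map (Int.castRingHom ℂ)).roots, ‖z‖ = ‖w‖)
    (hnoteven : ¬ ∃ a b : ℤ, f = X ^ 4 + C a * X ^ 2 + C b) :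
    ∀ x : ℝ, ¬ (f.map (Int.castRingHom ℝ)).IsRoot x := by
  intro ρ hρ
  set fR := f.map (Int.castRingHom ℝ) with hfR
  set fQ := f.map (Int.castRingHom ℚ) with hfQ
  have hRQ : fR = fQ.map (algebraMap ℚ ℝ) := by rw [hfR, hfQ, map_map]; congr 1
  have hmR : fR.Monic := hm.map _
  have hmQ : fQ.Monic := hm.map _
  have hdR : fR.natDegree = 4 := by
    rw [hfR, natDegree_map_eq_of_injective Int.cast_injective f, hdeg]
  have hdQ : fQ.natDegree = 4 := by
    rw [hfQ, natDegree_map_eq_of_injective Int.cast_injective f, hdeg]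
  have hirrQ : Irreducible fQ :=
    (IsPrimitive.Int.irreducible_iff_irreducible_map_cast hm.isPrimitive).mp hirr
  have hsep : fR.Separable := by rw [hRQ]; exact hirrQ.separable.map
  -- factor out (X - C ρ)
  obtain ⟨q, hq⟩ := dvd_iff_isRoot.mpr hρ
  have hqne : q ≠ 0 := by rintro rfl; rw [mul_zero] at hq; exact hmR.ne_zero hq
  have hdq : q.natDegree = 3 := by
    have := natDegree_mul (X_sub_C_ne_zero ρ) hqne
    rw [← hq, hdR, natDegree_X_sub_C] at this; omega
  -- q has a real root ρ'
  obtain ⟨ρ', hρ'⟩ : ∃ x : ℝ, q.IsRoot x := by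
    obtain ⟨z, hz⟩ := IsAlgClosed.exists_root (q.map (algebraMap ℝ ℂ))
      (by rw [degree_eq_natDegree (by simp [hqne]), natDegree_map, hdq]; exact (by norm_num))
    have hz' : aeval z q = 0 := by rwa [IsRoot, eval_map, ← aeval_def] at hz
    rcases eq_or_ne z.im 0 with h0 | h0
    · lift z to ℝ using h0
      refine ⟨z, ?_⟩
      erw [aeval_ofReal, RCLike.ofReal_eq_zero] at hz'
      exact hz'
    · obtain ⟨l, hl⟩ := q.quadratic_dvd_of_aeval_eq_zero_im_ne_zero hz' h0
      have hquadd : (X ^ 2 - C (2 * z.re) * X + C (‖z‖ ^ 2) : ℝ[X]).natDegree = 2 := by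
        compute_degree!
      have hlne : l ≠ 0 := by
        rintro rfl; rw [mul_zero] at hl; exact hqne hl
      have hld : l.natDegree = 1 := by
        have h2 : (X ^ 2 - C (2 * z.re) * X + C (‖z‖ ^ 2) : ℝ[X]) ≠ 0 := by
          intro h; rw [h] at hquadd; simp at hquadd
        have := natDegree_mul h2 hlne
        rw [← hl, hdq, hquadd] at this; omega
      obtain ⟨x, hx⟩ := exists_root_of_degree_eq_one
        ((degree_eq_iff_natDegree_eq hlne).mpr hld)
      exact ⟨x, by rw [IsRoot, hl, eval_mul, hx, mul_zero]⟩
  -- ρ' ≠ ρ by separability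
  have hne : ρ' ≠ ρ := by
    rintro rfl
    obtain ⟨l, hl⟩ := dvd_iff_isRoot.mpr hρ'
    have : (X - C ρ') * (X - C ρ') ∣ fR := ⟨l, by rw [hq, hl]; ring⟩
    exact (not_isUnit_X_sub_C ρ') (hsep.squarefree _ this)
  have hρ'R : fR.IsRoot ρ' := by rw [IsRoot, hq, eval_mul, hρ'.eq_zero, mul_zero]
  -- equal modulus forces ρ' = -ρ
  have habs := heqmod _ (memroots f hm ρ hρ) _ (memroots f hm ρ' hρ'R)
  rw [Complex.norm_real, Complex.norm_real, Real.norm_eq_abs, Real.norm_eq_abs] at habs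
  have hneg : ρ' = -ρ := by
    rcases abs_eq_abs.mp habs.symm with h | h
    · exact absurd h hne
    · exact h
  -- minpoly argument: fQ = fQ.comp (-X)
  have haev : aeval ρ fQ = 0 := by
    rw [aeval_def, ← eval_map, ← hRQ]; exact hρ
  have haevneg : aeval (-ρ) fQ = 0 := by
    rw [aeval_def, ← eval_map, ← hRQ]; rw [← hneg]; exact hρ'R
  have hmin : fQ = minpoly ℚ ρ := minpoly.eq_of_irreducible_of_monic hirrQ haev hmQ
  have hminneg : fQ = minpoly ℚ (-ρ) := minpoly.eq_of_irreducible_of_monic hirrQ haevneg hmQ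
  have hcomp : fQ = fQ.comp (-X) := by
    have := minpoly.neg (A := ℚ) ρ
    rw [← hmin, ← hminneg, hdQ] at this
    norm_num at this
    exact this
  -- extract: odd coefficients vanish
  have e := decomp4 fQ hmQ hdQ
  have ec : fQ.comp (-X) = X^4 - C (fQ.coeff 3)*X^3 + C (fQ.coeff 2)*X^2
      - C (fQ.coeff 1)*X + C (fQ.coeff 0) := by
    conv_lhs => rw [e]
    simp only [add_comp, mul_comp, pow_comp, X_comp, C_comp]
    ring
  have heq : (X^4 + C (fQ.coeff 3)*X^3 + C (fQ.coeff 2)*X^2 + C (fQ.coeff 1)*X + C (fQ.coeff 0) : ℚ[X])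
      = X^4 - C (fQ.coeff 3)*X^3 + C (fQ.coeff 2)*X^2 - C (fQ.coeff 1)*X + C (fQ.coeff 0) := by
    rw [← e, ← ec]; exact hcomp
  have h3 := congrArg (fun p => coeff p 3) heq
  have h1 := congrArg (fun p => coeff p 1) heq
  simp [coeff_X_pow, coeff_C] at h3 h1
  have hQc3 : fQ.coeff 3 = 0 := by linarith
  have hQc1 : fQ.coeff 1 = 0 := by linarith
  have hc3 : f.coeff 3 = 0 := by
    have h := hQc3; rw [hfQ, coeff_map] at h; simpa using h
  have hc1 : f.coeff 1 = 0 := by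
    have h := hQc1; rw [hfQ, coeff_map] at h; simpa using h
  apply hnoteven
  refine ⟨f.coeff 2, f.coeff 0, ?_⟩
  conv_lhs => rw [decomp4 f hm hdeg, hc3, hc1]
  simp

theorem decomp2 {R : Type*} [CommRing R] (f : R[X]) (hm : f.Monic) (hdeg : f.natDegree = 2) :
    f = X^2 + C (f.coeff 1) * X + C (f.coeff 0) := by
  have h2 : f.coeff 2 = 1 := by have := hm.coeff_natDegree; rwa [hdeg] at this
  conv_lhs => rw [f.as_sum_range' 3 (by omega), Finset.sum_range_succ, Finset.sum_range_succ,
    Finset.sum_range_one, h2]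
  simp only [← C_mul_X_pow_eq_monomial, map_one]
  ring

theorem even_contra (f : ℤ[X]) (hm : f.Monic) (hdeg : f.natDegree = 4)
    (h3 : f.coeff 3 = 0) (h1 : f.coeff 1 = 0) :
    ∃ a b : ℤ, f = X^4 + C a * X^2 + C b := by
  refine ⟨f.coeff 2, f.coeff 0, ?_⟩
  conv_lhs => rw [decomp4 f hm hdeg, h3, h1]
  simp

theorem stmt10 (f : Polynomial ℤ) (hm : f.Monic) (hirr : Irreducible f)
    (hdeg : f.natDegree = 4)
    (heqmod : ∀ z ∈ (f.map (Int.castRingHom ℂ)).roots,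
      ∀ w ∈ (f.map (Int.castRingHom ℂ)).roots, ‖z‖ = ‖w‖)
    (hnoteven : ¬ ∃ a b : ℤ, f = X ^ 4 + C a * X ^ 2 + C b) :
    (f.map (Int.castRingHom ℝ)).roots = 0 ∧
    ∃ (r : ℤ) (u v : ℝ), 0 < r ∧
      f.map (Int.castRingHom ℝ) =
        (X ^ 2 - C u * X + C (r : ℝ)) * (X ^ 2 - C v * X + C (r : ℝ)) ∧
      f.coeff 0 = r ^ 2 ∧
      u + v ≠ 0 ∧ (∃ z : ℤ, u + v = z) ∧ (∃ z : ℤ, u * v = z) ∧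
      u ^ 2 < 4 * r ∧ v ^ 2 < 4 * r := by
  have hnoreal := noRealRoot f hm hirr hdeg heqmod hnoteven
  set fR := f.map (Int.castRingHom ℝ) with hfRdef
  have hmR : fR.Monic := hm.map _
  have hdR : fR.natDegree = 4 := by
    rw [hfRdef, natDegree_map_eq_of_injective Int.cast_injective f, hdeg]
  have hFR : f.map (Int.castRingHom ℂ) = fR.map (algebraMap ℝ ℂ) := by
    rw [hfRdef, map_map]; congr 1
  have hroots0 : fR.roots = 0 := by
    rw [Multiset.eq_zero_iff_forall_notMem]
    intro x hx
    exact hnoreal x ((mem_roots hmR.ne_zero).mp hx)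
  refine ⟨hroots0, ?_⟩
  have hnrc : ∀ z : ℂ, aeval z fR = 0 → z.im ≠ 0 := by
    intro z hz h0
    lift z to ℝ using h0
    erw [aeval_ofReal, RCLike.ofReal_eq_zero] at hz
    exact hnoreal z hz
  have hmem : ∀ z : ℂ, aeval z fR = 0 → z ∈ (f.map (Int.castRingHom ℂ)).roots := by
    intro z hz
    rw [mem_roots ((hm.map _).ne_zero), IsRoot, hFR, eval_map, ← aeval_def]
    exact hz
  -- a complex root α
  obtain ⟨α, hα⟩ := IsAlgClosed.exists_root (fR.map (algebraMap ℝ ℂ))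
    (by rw [degree_eq_natDegree ((hmR.map _).ne_zero), natDegree_map, hdR]; norm_num)
  have hαaev : aeval α fR = 0 := by rwa [IsRoot, eval_map, ← aeval_def] at hα
  have hαim : α.im ≠ 0 := hnrc α hαaev
  obtain ⟨q2, hsplit⟩ := fR.quadratic_dvd_of_aeval_eq_zero_im_ne_zero hαaev hαim
  set u : ℝ := 2 * α.re with hu
  set rr : ℝ := ‖α‖ ^ 2 with hrr
  have hq1m : (X^2 - C u * X + C rr : ℝ[X]).Monic := by
    have h : (X^2 - C u * X + C rr : ℝ[X]) = X^2 + (C rr - C u * X) := by ring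
    rw [h]
    apply monic_X_pow_add
    apply lt_of_le_of_lt (b := (1 : WithBot ℕ))
    · compute_degree
    · decide
  have hq1d : (X^2 - C u * X + C rr : ℝ[X]).natDegree = 2 := by compute_degree!
  have hq2m : q2.Monic := hq1m.of_mul_monic_left (hsplit ▸ hmR)
  have hdq2 : q2.natDegree = 2 := by
    have h := natDegree_mul hq1m.ne_zero hq2m.ne_zero
    rw [← hsplit, hdR, hq1d] at h; omega
  have e2 := decomp2 q2 hq2m hdq2
  set v : ℝ := -(q2.coeff 1) with hv
  set c : ℝ := q2.coeff 0 with hcdef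
  -- a complex root β of q2
  obtain ⟨β, hβ⟩ := IsAlgClosed.exists_root (q2.map (algebraMap ℝ ℂ))
    (by rw [degree_eq_natDegree ((hq2m.map _).ne_zero), natDegree_map, hdq2]; norm_num)
  have hβaev : aeval β q2 = 0 := by rwa [IsRoot, eval_map, ← aeval_def] at hβ
  have hβfR : aeval β fR = 0 := by
    rw [hsplit, map_mul, hβaev, mul_zero]
  have hβim : β.im ≠ 0 := hnrc β hβfR
  -- c = ‖β‖ ^ 2
  have hc : c = ‖β‖ ^ 2 := by
    have hdvd := q2.mul_star_dvd_of_aeval_eq_zero_im_ne_zero hβaev hβim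
    have heq2 : q2.map (algebraMap ℝ ℂ) = (X - C ((starRingEnd ℂ) β)) * (X - C β) := by
      apply eq_of_monic_of_dvd_of_natDegree_le ((monic_X_sub_C _).mul (monic_X_sub_C _))
        (hq2m.map _) hdvd
      simp [natDegree_mul (X_sub_C_ne_zero ((starRingEnd ℂ) β)) (X_sub_C_ne_zero β),
        natDegree_X_sub_C, natDegree_map, hdq2]
    have h0 := congrArg (fun p => coeff p 0) heq2
    simp only [coeff_map, mul_coeff_zero, coeff_sub, coeff_X_zero, coeff_C_zero,
      zero_sub, neg_mul_neg] at h0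
    rw [← hcdef] at h0
    have h1 : (algebraMap ℝ ℂ) c = (algebraMap ℝ ℂ) (‖β‖ ^ 2) := by
      rw [h0, RCLike.conj_mul]
      norm_cast
    exact Complex.ofReal_injective h1
  have habs := heqmod α (hmem α hαaev) β (hmem β hβfR)
  have hcrr : c = rr := by
    rw [hc, hrr]
    rw [habs]
  have hq2form : q2 = X^2 - C v * X + C rr := by
    rw [e2, hcrr, hv]
    simp only [map_neg]
    ring
  -- expand the product
  have hexp : fR = X^4 - C (u+v) * X^3 + C (u*v + 2*rr) * X^2 - C (rr*(u+v)) * X + C (rr^2) := by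
    rw [hsplit, hq2form]
    simp only [map_add, map_mul, map_pow, map_ofNat, C_add, C_mul]
    ring
  have hcoeff : ∀ k, fR.coeff k = (f.coeff k : ℝ) := fun k => by
    rw [hfRdef, coeff_map]; rfl
  have h3 := congrArg (fun p => coeff p 3) hexp
  have h2 := congrArg (fun p => coeff p 2) hexp
  have h1 := congrArg (fun p => coeff p 1) hexp
  have h0 := congrArg (fun p => coeff p 0) hexp
  simp only [coeff_add, coeff_sub, coeff_C_mul, coeff_X_pow, coeff_C, coeff_X] at h3 h2 h1 h0
  norm_num at h3 h2 h1 h0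
  rw [hcoeff 3] at h3
  rw [hcoeff 2] at h2
  rw [hcoeff 1] at h1
  rw [hcoeff 0] at h0
  -- u + v ≠ 0
  have huv : u + v ≠ 0 := by
    intro h
    apply hnoteven
    apply even_contra f hm hdeg
    · have : (f.coeff 3 : ℝ) = 0 := by rw [h3]; linarith
      exact_mod_cast this
    · have : (f.coeff 1 : ℝ) = 0 := by rw [h1, h]; ring
      exact_mod_cast this
  have hc3ne : f.coeff 3 ≠ 0 := by
    intro h
    apply huv
    have := h3
    rw [h] at this
    push_cast at this
    linarith
  -- integer identity c1^2 = c0 * c3^2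
  have hZ : f.coeff 1 ^ 2 = f.coeff 0 * f.coeff 3 ^ 2 := by
    have : (f.coeff 1 : ℝ) ^ 2 = (f.coeff 0 : ℝ) * (f.coeff 3 : ℝ) ^ 2 := by
      rw [h1, h0, h3]; ring
    exact_mod_cast this
  have hdvd3 : f.coeff 3 ∣ f.coeff 1 := by
    refine (Int.pow_dvd_pow_iff two_ne_zero).mp ⟨f.coeff 0, ?_⟩
    rw [hZ]; ring
  obtain ⟨k, hk⟩ := hdvd3
  have hkr : (k : ℝ) = rr := by
    have hcast : (f.coeff 1 : ℝ) = (f.coeff 3 : ℝ) * (k : ℝ) := by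
      exact_mod_cast congrArg (fun z : ℤ => (z : ℝ)) hk
    rw [h1, h3] at hcast
    have h' : (u + v) * (k:ℝ) = (u + v) * rr := by linear_combination hcast
    exact mul_left_cancel₀ huv h'
  have hrrpos : 0 < rr := by
    rw [hrr]
    have hαne : α ≠ 0 := fun h => hαim (by simp [h])
    exact pow_pos (norm_pos_iff.mpr hαne) 2
  have hkpos : 0 < k := by
    have : (0:ℝ) < (k:ℝ) := by rw [hkr]; exact hrrpos
    exact_mod_cast this
  refine ⟨k, u, v, hkpos, ?_, ?_, huv, ?_, ?_, ?_, ?_⟩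
  · rw [hsplit, hq2form, hkr]
  swap
  · refine ⟨-(f.coeff 3), ?_⟩
    push_cast
    linarith [h3]
  · have : (f.coeff 0 : ℝ) = ((k:ℤ) : ℝ)^2 := by rw [h0, ← hkr]
    exact_mod_cast this
  · refine ⟨f.coeff 2 - 2*k, ?_⟩
    have : u * v = (f.coeff 2 : ℝ) - 2 * (k:ℝ) := by rw [hkr]; linarith [h2]
    rw [this]; push_cast; ring
  · -- u^2 < 4*k : u = 2*α.re, rr = re^2+im^2
    have him2 : 0 < α.im ^ 2 := lt_of_le_of_ne (sq_nonneg _) (Ne.symm (pow_ne_zero 2 hαim))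
    have hnsq : rr = α.re^2 + α.im^2 := by
      rw [hrr, Complex.sq_norm, Complex.normSq_apply]; ring
    have : u^2 < 4 * rr := by rw [hu, hnsq]; nlinarith
    calc u^2 < 4 * rr := this
      _ = 4 * (k:ℝ) := by rw [hkr]
  · -- v^2 < 4*k : q2 has no real root
    by_contra hcon
    push_neg at hcon
    have hge : 4 * rr ≤ v^2 := by rwa [← hkr]
    set d := Real.sqrt (v^2 - 4*rr) with hd
    have hd2 : d^2 = v^2 - 4*rr := Real.sq_sqrt (by linarith)
    set x := (v + d)/2 with hx
    have hroot : fR.IsRoot x := by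
      rw [IsRoot, hsplit, hq2form, eval_mul]
      have : eval x (X^2 - C v * X + C rr) = 0 := by
        simp only [eval_add, eval_sub, eval_mul, eval_pow, eval_C, eval_X]
        rw [hx]
        linear_combination hd2 / 4
      rw [this, mul_zero]
    exact hnoreal x hroot
end

section
/- If f ∈ ℤ[x] is a monic irreducible polynomial of degree 4 that has a real root and whose four roots all have equal modulus, then f(x) = f(−x), i.e., f is of the form x⁴ + ax² + b. -/
/-!
If all four complex roots of `f` have modulus `|α|`, then `|f(0)| = |α|⁴ = α⁴`, so the real root `α`
is also a root of `X⁴ - |f(0)| ∈ ℤ[X]`. As `f` is monic and irreducible over the integrally closed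
ring `ℤ`, it is the minimal polynomial of `α`, so it divides, and by degree equals,
`X⁴ - |f(0)|`, which is even.
-/

open Polynomial

theorem Polynomial.Splits.norm_coeff_zero_eq_of_forall_norm_root_eq {K : Type*} [NormedField K]
    {p : K[X]} (hp : p.Splits) {r : ℝ} (hr : ∀ z ∈ p.roots, ‖z‖ = r) :
    ‖p.coeff 0‖ = ‖p.leadingCoeff‖ * r ^ p.natDegree := by
  have hroots : p.roots.map (‖·‖) = Multiset.replicate p.natDegree r := by
    rw [Multiset.eq_replicate, Multiset.card_map, ← hp.natDegree_eq_card_roots]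
    refine ⟨rfl, fun b hb => ?_⟩
    obtain ⟨z, hz, rfl⟩ := Multiset.mem_map.mp hb
    exact hr z hz
  rw [hp.coeff_zero_eq_leadingCoeff_mul_prod_roots, norm_mul, norm_mul, norm_pow, norm_neg,
    norm_one, one_pow, one_mul, ← Multiset.prod_replicate, ← hroots]
  exact congrArg _ (map_multiset_prod (normHom : K →*₀ ℝ) _)

theorem Polynomial.Monic.abs_coeff_zero_eq_of_forall_norm_complex_root_eq {f : ℤ[X]}
    (hm : f.Monic) {r : ℝ} (hr : ∀ z ∈ (f.map (Int.castRingHom ℂ)).roots, ‖z‖ = r) :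
    (|f.coeff 0| : ℝ) = r ^ f.natDegree := by
  have h :=
    (IsAlgClosed.splits (f.map (Int.castRingHom ℂ))).norm_coeff_zero_eq_of_forall_norm_root_eq hr
  rwa [(hm.map _).leadingCoeff, norm_one, one_mul, hm.natDegree_map, coeff_map,
    eq_intCast, Complex.norm_intCast] at h

theorem Polynomial.Monic.eq_of_irreducible_of_aeval_eq_zero {R S : Type*} [CommRing R]
    [IsDomain R] [IsIntegrallyClosed R] [CommRing S] [IsDomain S] [Algebra R S]
    [Module.IsTorsionFree R S] {f g : R[X]} (hf : f.Monic) (hirr : Irreducible f) (hg : g.Monic)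
    (hdeg : g.natDegree ≤ f.natDegree) {x : S} (hfx : aeval x f = 0) (hgx : aeval x g = 0) :
    f = g := by
  have hx : IsIntegral R x := ⟨f, hf, hfx⟩
  have hmin : minpoly R x = f :=
    eq_of_monic_of_associated (minpoly.monic hx) hf <|
      (minpoly.irreducible hx).associated_of_dvd hirr (minpoly.isIntegrallyClosed_dvd hx hfx)
  refine (eq_of_monic_of_dvd_of_natDegree_le hf hg ?_ hdeg).symm
  exact hmin ▸ minpoly.isIntegrallyClosed_dvd hx hgx

theorem stmt11 (f : Polynomial ℤ) (hm : f.Monic) (hirr : Irreducible f)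
    (hdeg : f.natDegree = 4)
    (heqmod : ∀ z ∈ (f.map (Int.castRingHom ℂ)).roots,
      ∀ w ∈ (f.map (Int.castRingHom ℂ)).roots, ‖z‖ = ‖w‖)
    (hrealroot : ∃ α : ℝ, aeval α f = 0) :
    f.comp (-X) = f ∧ ∃ a b : ℤ, f = X ^ 4 + C a * X ^ 2 + C b := by
  obtain ⟨α, hα⟩ := hrealroot
  have hα_root : (α : ℂ) ∈ (f.map (Int.castRingHom ℂ)).roots := by
    rw [mem_roots_map_of_injective (RingHom.injective_int _) hm.ne_zero, ← Complex.coe_algebraMap]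
    exact (aeval_algebraMap_apply ℂ α f).trans (by rw [hα, map_zero])
  obtain ⟨n, hn⟩ : ∃ n : ℤ, (n : ℝ) = α ^ 4 := by
    refine ⟨|f.coeff 0|, ?_⟩
    rw [Int.cast_abs, hm.abs_coeff_zero_eq_of_forall_norm_complex_root_eq
      (fun z hz => heqmod z hz _ hα_root), hdeg, Complex.norm_real, Real.norm_eq_abs,
      (by decide : Even 4).pow_abs]
  have hf : f = X ^ 4 - C n :=
    hm.eq_of_irreducible_of_aeval_eq_zero hirr (monic_X_pow_sub_C n (by norm_num))
      (by rw [natDegree_X_pow_sub_C, hdeg]) hα (by simp [hn])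
  subst hf
  exact ⟨by simp [(by decide : Even 4).neg_pow], 0, -n, by simp [sub_eq_add_neg]⟩
end

section
/- For a positive integer m, the polynomial g(x) = (x − m)·∏_{i=1}^{ℓ}(x² − β_i x + m²), where β₁,…,β_ℓ are the real roots of a monic irreducible integer polynomial with all roots in (−2m, 2m), has integer coefficients and all its 2ℓ+1 roots lie on the circle |z| = m, with m being the only real root among them. -/
/-!
Writing `P = ∏ (X - βᵢ)`, the product `∏ (Y - βᵢ X)` is the homogenization of `P`, so it has
integer coefficients; substituting `Y = X² + m²` shows that `g` does too. Each factor
`X² - βᵢ X + m²` has negative discriminant `βᵢ² - 4m²`, so it has no real root and its complex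
roots `z` satisfy `2 Re z = βᵢ` and then `|z|² = m²`.
-/

open Polynomial

theorem norm_eq_of_sq_sub_mul_add_sq_eq_zero {m β : ℝ} (hm : 0 ≤ m) (hβ : β ^ 2 < 4 * m ^ 2)
    {z : ℂ} (hz : z ^ 2 - β * z + m ^ 2 = 0) : ‖z‖ = m := by
  have hre := congrArg Complex.re hz
  have him := congrArg Complex.im hz
  simp only [sq, Complex.add_re, Complex.sub_re, Complex.mul_re, Complex.mul_im, Complex.add_im,
    Complex.sub_im, Complex.ofReal_re, Complex.ofReal_im, Complex.zero_re,
    Complex.zero_im] at hre him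
  have him_ne : z.im ≠ 0 := by
    intro h
    rw [h] at hre
    nlinarith [sq_nonneg (2 * z.re - β)]
  have hβ_eq : β = 2 * z.re := by
    have : z.im * (2 * z.re - β) = 0 := by linear_combination him
    linarith [(mul_eq_zero.mp this).resolve_left him_ne]
  subst hβ_eq
  rw [Complex.norm_eq_sqrt_sq_add_sq, show z.re ^ 2 + z.im ^ 2 = m ^ 2 by linear_combination -hre,
    Real.sqrt_sq hm]

namespace Polynomial

theorem multiset_prod_scaleRoots {R : Type*} [CommSemiring R] [NoZeroDivisors R]
    (s : Multiset R[X]) (r : R) :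
    s.prod.scaleRoots r = (s.map (·.scaleRoots r)).prod := by
  induction s using Multiset.induction with
  | empty => simp [one_scaleRoots]
  | cons p s ih => simp [mul_scaleRoots_of_noZeroDivisors, ih]

/-- For `Q = ∑ aᵢ Xⁱ` of degree `n`, `(Q.map C).scaleRoots B = ∑ aᵢ Bⁿ⁻ⁱ Yⁱ` is its homogenization. -/
theorem multiset_prod_roots_sub_C_mul {R : Type*} [CommRing R] [IsDomain R] {Q : R[X]}
    (hQ : Q.Monic) (hroots : Q.roots.card = Q.natDegree) (A B : R[X]) :
    (Q.roots.map fun β => A - C β * B).prod = ((Q.map C).scaleRoots B).eval A := by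
  conv_rhs => rw [← prod_multiset_X_sub_C_of_monic_of_roots_card_eq hQ hroots]
  simp only [Polynomial.map_multiset_prod, multiset_prod_scaleRoots, eval_multiset_prod,
    Multiset.map_map, Function.comp_def, Polynomial.map_sub, map_X, map_C, X_sub_C_scaleRoots,
    eval_sub, eval_X, eval_C]

theorem exists_map_eq_multiset_prod_roots_sub_C_mul {S R : Type*} [CommRing S] [CommRing R]
    [IsDomain R] (f : S →+* R) {P : S[X]} (hP : P.Monic)
    (hroots : (P.map f).roots.card = P.natDegree) (A B : S[X]) :
    ∃ G : S[X], G.map f = ((P.map f).roots.map fun β => A.map f - C β * B.map f).prod := by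
  refine ⟨((P.map C).scaleRoots B).eval A, ?_⟩
  rw [multiset_prod_roots_sub_C_mul (hP.map f) (by rwa [hP.natDegree_map]), ← coe_mapRingHom,
    ← eval_map_apply, coe_mapRingHom, map_scaleRoots, Polynomial.map_map, mapRingHom_comp_C,
    ← Polynomial.map_map]
  · rfl
  · simp [(hP.map C).leadingCoeff]

theorem monic_X_sq_sub_C_mul_X_add_C {R : Type*} [CommRing R] [Nontrivial R] (b c : R) :
    (X ^ 2 - C b * X + C c).Monic := by
  rw [sub_eq_add_neg, add_assoc, ← neg_mul, ← C_neg]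
  exact monic_X_pow_add (degree_linear_le.trans_lt (by norm_num))

theorem natDegree_X_sq_sub_C_mul_X_add_C {R : Type*} [CommRing R] [Nontrivial R] (b c : R) :
    (X ^ 2 - C b * X + C c).natDegree = 2 := by
  rw [sub_eq_add_neg, ← neg_mul, ← C_neg, ← one_mul (X ^ 2), ← C_1]
  exact natDegree_quadratic one_ne_zero

section CircleFactors

variable {R : Type*} [CommRing R] [Nontrivial R] (s : Multiset R) (c : R)

theorem monic_multiset_prod_X_sq_sub_C_mul_X_add_C :
    (s.map fun b => X ^ 2 - C b * X + C c).prod.Monic :=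
  monic_multiset_prod_of_monic _ _ fun b _ => monic_X_sq_sub_C_mul_X_add_C b c

theorem natDegree_multiset_prod_X_sq_sub_C_mul_X_add_C :
    (s.map fun b => X ^ 2 - C b * X + C c).prod.natDegree = 2 * Multiset.card s := by
  rw [natDegree_multiset_prod_of_monic _ fun p hp => by
      obtain ⟨b, -, rfl⟩ := Multiset.mem_map.mp hp
      exact monic_X_sq_sub_C_mul_X_add_C b c,
    Multiset.map_map, Function.comp_def]
  simp only [natDegree_X_sq_sub_C_mul_X_add_C, Multiset.map_const', Multiset.sum_replicate,
    smul_eq_mul]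
  ring

end CircleFactors

theorem roots_multiset_prod_X_sq_sub_C_mul_X_add_C_eq_zero {s : Multiset ℝ} {c : ℝ}
    (hs : ∀ b ∈ s, b ^ 2 < 4 * c) :
    (s.map fun b => X ^ 2 - C b * X + C c).prod.roots = 0 := by
  refine Multiset.eq_zero_of_forall_notMem fun x hx => ?_
  have hx := isRoot_of_mem_roots hx
  rw [IsRoot, eval_multiset_prod, Multiset.prod_eq_zero_iff, Multiset.map_map] at hx
  obtain ⟨b, hb, hbx⟩ := Multiset.mem_map.mp hx
  simp only [Function.comp_apply, eval_add, eval_sub, eval_mul, eval_pow, eval_X, eval_C] at hbx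
  nlinarith [sq_nonneg (2 * x - b), hs b hb]

theorem norm_eq_of_aeval_multiset_prod_eq_zero {m : ℝ} (hm : 0 ≤ m) {s : Multiset ℝ}
    (hs : ∀ b ∈ s, b ^ 2 < 4 * m ^ 2) {z : ℂ}
    (hz : aeval z (s.map fun b => X ^ 2 - C b * X + C (m ^ 2)).prod = 0) : ‖z‖ = m := by
  rw [map_multiset_prod, Multiset.prod_eq_zero_iff, Multiset.map_map] at hz
  obtain ⟨b, hb, hbz⟩ := Multiset.mem_map.mp hz
  simp only [Function.comp_apply, map_add, map_sub, map_mul, map_pow, aeval_X, aeval_C,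
    Complex.coe_algebraMap] at hbz
  exact norm_eq_of_sq_sub_mul_add_sq_eq_zero hm (hs b hb) (by exact_mod_cast hbz)

end Polynomial

theorem stmt13_general (m : ℕ) (ℓ : ℕ) (P : Polynomial ℤ)
    (hmonic : P.Monic) (hdeg : P.natDegree = ℓ)
    (hreal : (P.map (Int.castRingHom ℝ)).roots.card = ℓ)
    (hbound : ∀ β ∈ (P.map (Int.castRingHom ℝ)).roots, β ^ 2 < 4 * m ^ 2)
    (g : Polynomial ℝ)
    (hg : g = (X - C (m : ℝ)) * ((P.map (Int.castRingHom ℝ)).roots.map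
      (fun β => X ^ 2 - C β * X + C ((m : ℝ) ^ 2))).prod) :
    (∃ G : Polynomial ℤ, G.map (Int.castRingHom ℝ) = g) ∧
    (g.map (algebraMap ℝ ℂ)).roots.card = 2 * ℓ + 1 ∧
    (∀ z ∈ (g.map (algebraMap ℝ ℂ)).roots, ‖z‖ = m) ∧
    g.roots = {(m : ℝ)} := by
  have hfactors_ne := (monic_multiset_prod_X_sq_sub_C_mul_X_add_C
    (P.map (Int.castRingHom ℝ)).roots ((m : ℝ) ^ 2)).ne_zero
  refine ⟨?_, ?_, ?_, ?_⟩
  · obtain ⟨G, hG⟩ := exists_map_eq_multiset_prod_roots_sub_C_mul (Int.castRingHom ℝ) hmonic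
      (hreal.trans hdeg.symm) (X ^ 2 + C ((m : ℤ) ^ 2)) X
    refine ⟨(X - C (m : ℤ)) * G, ?_⟩
    rw [Polynomial.map_mul, hG, hg]
    congr 1
    · simp only [Polynomial.map_sub, map_X, Polynomial.map_natCast, map_natCast]
    · refine congrArg _ (Multiset.map_congr rfl fun β _ => ?_)
      simp only [Polynomial.map_add, Polynomial.map_pow, map_X, map_pow, Polynomial.map_natCast,
        map_natCast]
      ring
  · rw [← (IsAlgClosed.splits _).natDegree_eq_card_roots, natDegree_map, hg,
      natDegree_mul (X_sub_C_ne_zero _) hfactors_ne, natDegree_X_sub_C,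
      natDegree_multiset_prod_X_sq_sub_C_mul_X_add_C, hreal]
    ring
  · intro z hz
    rw [hg, mem_roots_map (mul_ne_zero (X_sub_C_ne_zero _) hfactors_ne), ← aeval_def, map_mul,
      mul_eq_zero] at hz
    rcases hz with hzm | hz
    · simp only [map_sub, aeval_X, aeval_C, Complex.coe_algebraMap, sub_eq_zero] at hzm
      rw [hzm]
      exact_mod_cast Complex.norm_natCast m
    · exact norm_eq_of_aeval_multiset_prod_eq_zero (Nat.cast_nonneg m) hbound hz
  · rw [hg, roots_mul (mul_ne_zero (X_sub_C_ne_zero _) hfactors_ne), roots_X_sub_C,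
      roots_multiset_prod_X_sq_sub_C_mul_X_add_C_eq_zero hbound, add_zero]

theorem stmt13 (m : ℕ) (hm : 1 ≤ m) (ℓ : ℕ) (hℓ : 1 ≤ ℓ) (P : Polynomial ℤ)
    (hmonic : P.Monic) (hirr : Irreducible P) (hdeg : P.natDegree = ℓ)
    (hreal : (P.map (Int.castRingHom ℝ)).roots.card = ℓ)
    (hbound : ∀ β ∈ (P.map (Int.castRingHom ℝ)).roots, β ^ 2 < 4 * m ^ 2)
    (g : Polynomial ℝ)
    (hg : g = (X - C (m : ℝ)) * ((P.map (Int.castRingHom ℝ)).roots.map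
      (fun β => X ^ 2 - C β * X + C ((m : ℝ) ^ 2))).prod) :
    (∃ G : Polynomial ℤ, G.map (Int.castRingHom ℝ) = g) ∧
    (g.map (algebraMap ℝ ℂ)).roots.card = 2 * ℓ + 1 ∧
    (∀ z ∈ (g.map (algebraMap ℝ ℂ)).roots, ‖z‖ = m) ∧
    g.roots = {(m : ℝ)} :=
  stmt13_general m ℓ P hmonic hdeg hreal hbound g hg
end

section
/- Let k ≥ 1 be odd and let f ∈ ℤ[x] be a monic irreducible polynomial of degree n having exactly k roots of maximal modulus (counted with multiplicity). Then k divides n. -/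
/-!
Complex conjugation permutes the `k` roots of maximal modulus `r`; since `k` is odd it fixes one
of them, a real root `a`, and the product `t` of these roots is real as well, so `t = ± a ^ k`.
Realise the roots in the splitting field `K` of `f` over `ℚ`, embedded in `ℂ`. If a Galois
automorphism `σ` sends `a` to a root of modulus `r`, then `σ t = ± (σ a) ^ k` has modulus `r ^ k`
while being a product of `k` roots of modulus at most `r`, so `σ` permutes the roots of modulus
`r`. These roots therefore form the orbit of `a` under the subgroup `H = {σ | ‖σ a‖ = r}`, which
contains the stabiliser of `a`, and `k = [H : Stab a]` divides `[Gal(K/ℚ) : Stab a] = n`.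
-/

open Polynomial Finset MulAction ComplexConjugate

theorem Finset.eq_of_prod_eq_pow_card {ι : Type*} {s : Finset ι} {f : ι → ℝ} {r : ℝ}
    (h0 : ∀ i ∈ s, 0 ≤ f i) (hle : ∀ i ∈ s, f i ≤ r) (hprod : ∏ i ∈ s, f i = r ^ #s) :
    ∀ i ∈ s, f i = r := by
  classical
  intro i hi
  by_contra hne
  have hlt : f i < r := (hle i hi).lt_of_ne hne
  have hr : 0 < r := (h0 i hi).trans_lt hlt
  have hrest : ∏ j ∈ s.erase i, f j ≤ r ^ #(s.erase i) := by
    simpa using prod_le_prod (fun j hj => h0 j (mem_of_mem_erase hj))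
      (fun j hj => hle j (mem_of_mem_erase hj))
  have : ∏ j ∈ s, f j < r ^ #s := calc
    ∏ j ∈ s, f j = f i * ∏ j ∈ s.erase i, f j := (mul_prod_erase s f hi).symm
    _ ≤ f i * r ^ #(s.erase i) := mul_le_mul_of_nonneg_left hrest (h0 i hi)
    _ < r * r ^ #(s.erase i) := mul_lt_mul_of_pos_right hlt (pow_pos hr _)
    _ = r ^ #s := by rw [← pow_succ', card_erase_add_one hi]
  exact this.ne hprod

theorem Finset.exists_mem_apply_eq_self_of_involutive {α : Type*} {f : α → α}
    (hf : Function.Involutive f) {s : Finset α} (hs : ∀ x ∈ s, f x ∈ s) (hodd : Odd #s) :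
    ∃ x ∈ s, f x = x := by
  classical
  let σ : Equiv.Perm s := (hf.toPerm f).subtypePerm
    fun x => ⟨fun h => by simpa [hf x] using hs _ h, hs x⟩
  have hσ : σ ^ 2 ^ 1 = 1 := by
    ext x
    simp [σ, sq, Equiv.Perm.mul_apply, hf _]
  obtain ⟨⟨x, hx⟩, hfix⟩ := Equiv.Perm.exists_fixed_point_of_prime (p := 2)
    (by rw [Fintype.card_coe]; exact hodd.not_two_dvd_nat) hσ
  exact ⟨x, hx, congrArg Subtype.val hfix⟩

theorem Complex.eq_or_eq_neg_of_conj_eq {z w : ℂ} (hz : conj z = z) (hw : conj w = w)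
    (hzw : ‖z‖ = ‖w‖) : z = w ∨ z = -w := by
  obtain ⟨x, rfl⟩ := Complex.conj_eq_iff_real.mp hz
  obtain ⟨y, rfl⟩ := Complex.conj_eq_iff_real.mp hw
  simp only [Complex.norm_real, Real.norm_eq_abs] at hzw
  rcases abs_eq_abs.mp hzw with h | h <;> simp [h]

theorem Complex.exists_mem_prod_eq_pow_or_neg {S : Finset ℂ} {r : ℝ}
    (hconj : ∀ z ∈ S, conj z ∈ S) (hodd : Odd #S) (hnorm : ∀ z ∈ S, ‖z‖ = r) :
    ∃ a ∈ S, ∏ z ∈ S, z = a ^ #S ∨ ∏ z ∈ S, z = -a ^ #S := by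
  obtain ⟨a, ha, ha_real⟩ :=
    exists_mem_apply_eq_self_of_involutive Complex.conj_conj hconj hodd
  refine ⟨a, ha, Complex.eq_or_eq_neg_of_conj_eq ?_ (by rw [map_pow, ha_real]) ?_⟩
  · rw [map_prod]
    exact prod_nbij' conj conj hconj hconj (fun z _ => conj_conj z) (fun z _ => conj_conj z)
      fun _ _ => rfl
  · rw [norm_prod, norm_pow, hnorm a ha, prod_congr rfl hnorm, prod_const]

theorem RingHom.exists_mem_prod_eq_pow_or_neg {R : Type*} [CommRing R] {φ : R →+* ℂ}
    (hφ : Function.Injective φ) {S : Finset R} {r : ℝ} (hconj : ∀ x ∈ S, conj (φ x) ∈ S.image φ)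
    (hodd : Odd #S) (hnorm : ∀ x ∈ S, ‖φ x‖ = r) :
    ∃ a ∈ S, ∏ x ∈ S, x = a ^ #S ∨ ∏ x ∈ S, x = -a ^ #S := by
  obtain ⟨_, ha, hprod⟩ := Complex.exists_mem_prod_eq_pow_or_neg (S := S.image φ)
    (by simpa using hconj) (by rwa [card_image_of_injective _ hφ]) (by simpa using hnorm)
  obtain ⟨a, haS, rfl⟩ := mem_image.mp ha
  rw [prod_image hφ.injOn, card_image_of_injective _ hφ, ← map_prod, ← map_pow, ← map_neg,
    hφ.eq_iff, hφ.eq_iff] at hprod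
  exact ⟨a, haS, hprod⟩

theorem RingHom.norm_eq_of_prod_eq_pow_or_neg {R : Type*} [CommRing R] (φ : R →+* ℂ)
    {S : Finset R} {a : R} {r : ℝ} (hprod : ∏ x ∈ S, x = a ^ #S ∨ ∏ x ∈ S, x = -a ^ #S)
    (ha : ‖φ a‖ = r) (hle : ∀ x ∈ S, ‖φ x‖ ≤ r) : ∀ x ∈ S, ‖φ x‖ = r := by
  refine eq_of_prod_eq_pow_card (fun _ _ => norm_nonneg _) hle ?_
  rw [← norm_prod, ← map_prod, ← ha, ← norm_pow, ← map_pow]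
  rcases hprod with h | h <;> simp [h]

theorem MulAction.card_dvd_card_orbit_of_smul_mem {G X : Type*} [Group G] [MulAction G X]
    {a : X} {B : Finset X} (ha : a ∈ B) (hB : ↑B ⊆ orbit G a)
    (hsmul : ∀ g : G, g • a ∈ B → ∀ x ∈ B, g • x ∈ B) : #B ∣ Nat.card (orbit G a) := by
  -- `g` maps the finite set `B` into, hence onto, itself
  have hperm : ∀ g : G, g • a ∈ B → a ∈ B.map (toPerm g).toEmbedding := fun g hg => by
    rw [map_eq_of_subset fun y hy => ?_]
    · exact ha
    · obtain ⟨x, hx, rfl⟩ := mem_map.mp hy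
      exact hsmul g hg x hx
  let H : Subgroup G :=
    { carrier := {g | g • a ∈ B}
      one_mem' := by simpa using ha
      mul_mem' := fun {g h} hg hh => by simpa [mul_smul] using hsmul g hg _ hh
      inv_mem' := fun {g} hg => by
        obtain ⟨x, hx, hxa⟩ := mem_map.mp (hperm g hg)
        simpa [← hxa] using hx }
  have horbit : orbit H a = B := by
    ext x
    refine ⟨?_, fun hx => ?_⟩
    · rintro ⟨⟨g, hg⟩, rfl⟩
      exact hg
    · obtain ⟨g, rfl⟩ := hB hx
      exact ⟨⟨g, hx⟩, rfl⟩
  have hstab : stabilizer G a ≤ H := fun g hg => by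
    change g • a ∈ B
    rwa [mem_stabilizer_iff.mp hg]
  calc #B = (orbit H a).ncard := by rw [horbit, Set.ncard_coe_finset]
    _ = (stabilizer G a).relIndex H := by
      rw [← index_stabilizer]; rfl
    _ ∣ (stabilizer G a).index := Subgroup.relIndex_dvd_index_of_le hstab
    _ = Nat.card (orbit G a) := by rw [index_stabilizer, Nat.card_coe_set_eq]

theorem Polynomial.orbit_eq_rootSet {F E : Type*} [Field F] [Field E] [Algebra F E] [Normal F E]
    {p : F[X]} (hp : Irreducible p) {a : E} (ha : a ∈ p.rootSet E) :
    orbit Gal(E/F) a = p.rootSet E := by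
  ext x
  rw [← Normal.minpoly_eq_iff_mem_orbit, mem_rootSet_of_ne hp.ne_zero]
  rw [mem_rootSet_of_ne hp.ne_zero] at ha
  refine ⟨fun h => ?_, fun hx => ?_⟩
  · exact aeval_eq_zero_of_dvd_aeval_eq_zero (h ▸ minpoly.dvd F a ha) (minpoly.aeval F x)
  · rw [← minpoly.eq_of_irreducible hp hx, ← minpoly.eq_of_irreducible hp ha]

theorem Polynomial.card_dvd_natDegree_of_prod_eq_pow_or_neg {F K : Type*} [Field F] [Field K]
    [Algebra F K] [Normal F K] {p : F[X]} (hp : Irreducible p) (hsep : p.Separable)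
    (hsplit : (p.map (algebraMap F K)).Splits) (ι : K →+* ℂ) {r : ℝ}
    (hr : ∀ x ∈ p.rootSet K, ‖ι x‖ ≤ r) {S : Finset K}
    (hS : ∀ x, x ∈ S ↔ x ∈ p.rootSet K ∧ ‖ι x‖ = r) {a : K} (ha : a ∈ S)
    (hprod : ∏ x ∈ S, x = a ^ #S ∨ ∏ x ∈ S, x = -a ^ #S) : #S ∣ p.natDegree := by
  have horbit := orbit_eq_rootSet hp ((hS a).mp ha).1
  have hdvd := card_dvd_card_orbit_of_smul_mem ha (fun x hx => horbit ▸ ((hS x).mp hx).1)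
    fun σ hσ x hx => (hS _).mpr ⟨rootSet_mapsTo σ.toAlgHom ((hS x).mp hx).1, ?_⟩
  · rwa [horbit, Nat.card_eq_fintype_card, card_rootSet_eq_natDegree hsep hsplit] at hdvd
  · exact (ι.comp σ.toRingHom).norm_eq_of_prod_eq_pow_or_neg hprod ((hS _).mp hσ).2
      (fun y hy => hr _ (rootSet_mapsTo σ.toAlgHom ((hS y).mp hy).1)) x hx

theorem stmt14_general (k n : ℕ) (hk : Odd k)
    (f : Polynomial ℤ) (hm : f.Monic) (hirr : Irreducible f) (hdeg : f.natDegree = n)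
    (r : ℝ)
    (hr : ∀ z ∈ (f.map (Int.castRingHom ℂ)).roots, ‖z‖ ≤ r)
    (hcard : ((f.map (Int.castRingHom ℂ)).roots.filter
      (fun z => ‖z‖ = r)).card = k) :
    k ∣ n := by
  classical
  set p : ℚ[X] := f.map (algebraMap ℤ ℚ)
  have hp : Irreducible p := hm.irreducible_iff_irreducible_map_fraction_map.mp hirr
  have hroots : (f.map (Int.castRingHom ℂ)).roots = p.aroots ℂ := by
    rw [aroots, Polynomial.map_map]
    congr 2
  rw [hroots] at hr hcard
  let K := p.SplittingField
  let ι : K →ₐ[ℚ] ℂ := IsAlgClosed.lift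
  have hι : Function.Injective ι := (ι : K →+* ℂ).injective
  let S := (p.rootSet K).toFinset.filter fun x => ‖ι x‖ = r
  have hS : ∀ x, x ∈ S ↔ x ∈ p.rootSet K ∧ ‖ι x‖ = r := by simp [S]
  have hSℂ : ∀ z, z ∈ S.image ι ↔ z ∈ p.rootSet ℂ ∧ ‖z‖ = r := by
    simp only [mem_image, hS, ← (SplittingField.splits p).image_rootSet ι]
    aesop
  have hcardS : #S = k := by
    rw [← card_image_of_injective _ hι, ← hcard,
      ← Multiset.toFinset_card_of_nodup ((nodup_roots hp.separable.map).filter _)]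
    congr 1
    ext z
    simp [hSℂ, rootSet_def]
  have hconj : ∀ x ∈ S, conj (ι x) ∈ S.image ι := fun x hx => by
    obtain ⟨hroot, hnorm⟩ := (hSℂ _).mp (mem_image_of_mem ι hx)
    exact (hSℂ _).mpr ⟨rootSet_mapsTo (Complex.conjAe.restrictScalars ℚ).toAlgHom hroot,
      by rwa [Complex.norm_conj]⟩
  obtain ⟨a, haS, hprod⟩ := (ι : K →+* ℂ).exists_mem_prod_eq_pow_or_neg hι hconj (hcardS ▸ hk)
    fun x hx => ((hS x).mp hx).2
  have := card_dvd_natDegree_of_prod_eq_pow_or_neg hp hp.separable (SplittingField.splits p)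
    (ι : K →+* ℂ) (fun x hx => hr _ (by simpa [rootSet_def] using rootSet_mapsTo ι hx)) hS haS hprod
  rwa [hcardS, hm.natDegree_map, hdeg] at this

theorem stmt14 (k n : ℕ) (hk : Odd k) (hk1 : 1 ≤ k)
    (f : Polynomial ℤ) (hm : f.Monic) (hirr : Irreducible f) (hdeg : f.natDegree = n)
    (r : ℝ)
    (hr : ∀ z ∈ (f.map (Int.castRingHom ℂ)).roots, ‖z‖ ≤ r)
    (hattain : ∃ z ∈ (f.map (Int.castRingHom ℂ)).roots, ‖z‖ = r)
    (hcard : ((f.map (Int.castRingHom ℂ)).roots.filter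
      (fun z => ‖z‖ = r)).card = k) :
    k ∣ n :=
  stmt14_general k n hk f hm hirr hdeg r hr hcard
end
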